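/- arXiv:1908.07585 — 3 statements merged into one kernel-verified Lean document; each statement's English description precedes it below -/
import Mathlib

section
/- Let λ > 0 and let k be a real constant with k ≥ log(cosh(λ/m)) / (λ/m). Let z_1,…,z_m be i.i.d. draws from D, let ε_1,…,ε_m be i.i.d. Rademacher random variables, let f ∼ P be a random {0,1}-valued function, with z's, ε's and f mutually independent. Then E_{f∼P} E_{S} E_{ε} [ exp( (λ/m)·Σ_{i=1}^m (ε_i − k)·f(z_i) ) ] ≤ 1. -/
open MeasureTheory Real

/-- Empirical risk of a loss function `ℓ f` on a sample `S` of size `m`. -/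
noncomputable def empRisk {Z F : Type*} (ℓ : F → Z → ℝ) {m : ℕ} (S : Fin m → Z) (f : F) : ℝ :=
  (m : ℝ)⁻¹ * ∑ i, ℓ f (S i)

/-- Risk (expected loss) of `ℓ f` under the data distribution `D`. -/
noncomputable def risk {Z F : Type*} [MeasurableSpace Z] (D : Measure Z) (ℓ : F → Z → ℝ)
    (f : F) : ℝ := ∫ z, ℓ f z ∂D

/-- Empirical risk of a Gibbs classifier (distribution) `Q`. -/
noncomputable def gibbsEmpRisk {Z F : Type*} [MeasurableSpace F] (ℓ : F → Z → ℝ) {m : ℕ}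
    (S : Fin m → Z) (Q : Measure F) : ℝ := ∫ f, empRisk ℓ S f ∂Q

/-- Risk of a Gibbs classifier (distribution) `Q`. -/
noncomputable def gibbsRisk {Z F : Type*} [MeasurableSpace Z] [MeasurableSpace F]
    (D : Measure Z) (ℓ : F → Z → ℝ) (Q : Measure F) : ℝ := ∫ f, risk D ℓ f ∂Q

/-- Kullback–Leibler divergence of `Q` from `P` (meaningful when `Q ≪ P` and the
log-likelihood ratio is `Q`-integrable). -/
noncomputable def KL {F : Type*} [MeasurableSpace F] (Q P : Measure F) : ℝ :=
  ∫ f, llr Q P f ∂Q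

/-- A Rademacher variable realized from a fair coin: `+1` on `true`, `-1` on `false`. -/
noncomputable def rad (b : Bool) : ℝ := if b then 1 else -1

/-- The fair-coin distribution on `Bool`, realizing Rademacher random variables via `rad`. -/
noncomputable def radMeasure : Measure Bool := (PMF.uniformOfFintype Bool).toMeasure

instance : IsProbabilityMeasure radMeasure := by
  unfold radMeasure; infer_instance

/-! For a single `{0,1}` term, `E_ε exp (c (ε - k) a)` is `1` when `a = 0` and
`exp (-c k) cosh c` when `a = 1`, and the latter is at most `1` exactly when
`log (cosh c) ≤ k c`. The Rademacher signs are independent, so the exponential moment of the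
sum factors into such terms; averaging a quantity bounded by `1` over `S` and `f` keeps it
at most `1`. -/

open Finset

lemma radMeasure_singleton (b : Bool) : radMeasure {b} = 2⁻¹ := by
  rw [radMeasure, PMF.toMeasure_apply_singleton _ _ (measurableSet_singleton b)]
  simp [PMF.uniformOfFintype_apply]

lemma integral_radMeasure (g : Bool → ℝ) : ∫ b, g b ∂radMeasure = (g true + g false) / 2 := by
  rw [integral_fintype .of_finite]
  simp [measureReal_def, radMeasure_singleton]
  ring

-- No integrability is needed: a non-integrable `g` has Bochner integral `0`.
lemma integral_le_one_of_forall_le_one {α : Type*} [MeasurableSpace α] (μ : Measure α)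
    [IsProbabilityMeasure μ] {g : α → ℝ} (h : ∀ x, g x ≤ 1) : ∫ x, g x ∂μ ≤ 1 := by
  by_cases hg : Integrable g μ
  · simpa using integral_mono hg (integrable_const 1) h
  · simp [integral_undef hg]

lemma integral_exp_mul_rad_sub_mul_le_one {c k a : ℝ} (hck : log (cosh c) ≤ k * c)
    (ha : a = 0 ∨ a = 1) : ∫ b, exp (c * ((rad b - k) * a)) ∂radMeasure ≤ 1 := by
  rw [integral_radMeasure]
  rcases ha with rfl | rfl
  · simp
  · have hcosh : cosh c ≤ exp (k * c) := (log_le_iff_le_exp (cosh_pos c)).mp hck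
    calc (exp (c * ((rad true - k) * 1)) + exp (c * ((rad false - k) * 1))) / 2
        = exp (-(k * c)) * cosh c := by
          rw [cosh_eq, mul_div_assoc', mul_add, ← exp_add, ← exp_add]
          congr 3 <;> simp only [rad, if_true, Bool.false_eq_true, if_false] <;> ring
      _ ≤ exp (-(k * c)) * exp (k * c) := by gcongr
      _ = 1 := by rw [← exp_add, neg_add_cancel, exp_zero]

lemma integral_exp_mul_sum_rad_sub_mul_le_one {ι : Type*} [Fintype ι] {c k : ℝ}
    (hck : log (cosh c) ≤ k * c) (a : ι → ℝ) (ha : ∀ i, a i = 0 ∨ a i = 1) :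
    ∫ ε : ι → Bool, exp (c * ∑ i, (rad (ε i) - k) * a i)
      ∂(Measure.pi fun _ => radMeasure) ≤ 1 := by
  simp_rw [mul_sum, exp_sum]
  rw [integral_fintype_prod_eq_prod (fun i b => exp (c * ((rad b - k) * a i)))]
  exact prod_le_one (fun i _ => integral_nonneg fun _ => (exp_pos _).le)
    fun i _ => integral_exp_mul_rad_sub_mul_le_one hck (ha i)

lemma log_cosh_le_mul_of_div_le {c k : ℝ} (hc : 0 ≤ c) (h : log (cosh c) / c ≤ k) :
    log (cosh c) ≤ k * c := by
  rcases hc.eq_or_lt with rfl | hc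
  · simp
  · exact (div_le_iff₀ hc).mp h

theorem stmt7_general {Z F : Type*} [MeasurableSpace Z] [MeasurableSpace F]
    (D : Measure Z) [IsProbabilityMeasure D]
    (ℓ : F → Z → ℝ)
    (hℓ : ∀ f z, ℓ f z = 0 ∨ ℓ f z = 1)
    (P : Measure F) [IsProbabilityMeasure P]
    (m : ℕ)
    (lam k : ℝ) (hlam : 0 < lam)
    (hk : Real.log (Real.cosh (lam / m)) / (lam / m) ≤ k) :
    (∫ f, ∫ S : Fin m → Z, ∫ ε : Fin m → Bool,
        Real.exp ((lam / m) * ∑ i, (rad (ε i) - k) * ℓ f (S i))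
      ∂(Measure.pi fun _ : Fin m => radMeasure)
      ∂(Measure.pi fun _ : Fin m => D) ∂P) ≤ 1 := by
  have hck := log_cosh_le_mul_of_div_le (by positivity) hk
  refine integral_le_one_of_forall_le_one P fun f => ?_
  refine integral_le_one_of_forall_le_one _ fun S => ?_
  exact integral_exp_mul_sum_rad_sub_mul_le_one hck (fun i => ℓ f (S i)) fun i => hℓ f (S i)

/-- The key shifted-Rademacher moment bound: if `k ≥ log (cosh (λ/m)) / (λ/m)`, then the
exponential moment of the shifted Rademacher process is at most `1`. -/
theorem stmt7 {Z F : Type*} [MeasurableSpace Z] [MeasurableSpace F]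
    (D : Measure Z) [IsProbabilityMeasure D]
    (ℓ : F → Z → ℝ)
    (hℓ : ∀ f z, ℓ f z = 0 ∨ ℓ f z = 1)
    (hℓZ : ∀ f, Measurable (ℓ f))
    (hℓF : ∀ z, Measurable fun f => ℓ f z)
    (P : Measure F) [IsProbabilityMeasure P]
    (m : ℕ) (hm : 0 < m)
    (lam k : ℝ) (hlam : 0 < lam)
    (hk : Real.log (Real.cosh (lam / m)) / (lam / m) ≤ k) :
    (∫ f, ∫ S : Fin m → Z, ∫ ε : Fin m → Bool,
        Real.exp ((lam / m) * ∑ i, (rad (ε i) - k) * ℓ f (S i))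
      ∂(Measure.pi fun _ : Fin m => radMeasure)
      ∂(Measure.pi fun _ : Fin m => D) ∂P) ≤ 1 :=
  stmt7_general D ℓ hℓ P m lam k hlam hk
end

section
/- (Shifted symmetrization in deviation.) Fix constants c > c₂ > 0 and set c' = (c−c₂)/(1+c₂) and t' = t/(2(1+c₂)). For any class F of measurable functions f : Z → [0,1] and any t ≥ (1+c₂)²/(m·c₂): (1/4)·P_S( sup_{f ∈ F} [ L_D(f) − (1+c)·L̂_S(f) ] ≥ t ) ≤ P_{S,ε}( sup_{f ∈ F} [ ((1+c'/2)/m)·Σ_{i=1}^m ( ε_i − (c'/2)/(1+c'/2) )·f(z_i) ] ≥ t'/2 ), where ε_1,…,ε_m are i.i.d. Rademacher random variables independent of S. -/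
open MeasureTheory Real

open ProbabilityTheory Filter Set
open scoped ENNReal

/-!
Ghost sample. If `L_D(f) - (1 + c) L̂_S(f) ≥ t`, Chebyshev's inequality (the variance of
`L̂_{S'}(f)` is at most `L_D(f) / m`) and `t ≥ (1 + c₂)² / (m c₂)` show that with probability at
least `1/2` over an independent sample `S'` one has `L_D(f) ≤ (1 + c₂) (L̂_{S'}(f) + t')`, hence
`L̂_{S'}(f) - (1 + c') L̂_S(f) ≥ t'` because `(1 + c₂) (1 + c') = 1 + c`. The supremum need not be
attained, so this is applied to a sequence of near-maximisers and the good events are combined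
through their `limsup`.

Sign flips. Exchanging `z_i` and `z'_i` wherever `ε_i = -1` preserves the law of `(S, S')` and
turns `L̂_{S'}(f) - (1 + c') L̂_S(f)` into the sum of two shifted Rademacher averages, one over `S'`
with signs `ε` and one over `S` with signs `-ε`; each of them exceeds `t' / 2` with the same
probability.
-/

namespace MeasureTheory

lemma le_measure_limsup_atTop {α : Type*} [MeasurableSpace α] {μ : Measure α}
    [IsFiniteMeasure μ] {s : ℕ → Set α} (hs : ∀ n, MeasurableSet (s n)) {p : ℝ≥0∞}
    (h : ∀ n, p ≤ μ (s n)) : p ≤ μ (limsup s atTop) := by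
  have hanti : Antitone fun N => ⋃ n ≥ N, s n :=
    fun N N' hN => biUnion_mono (fun n hn => le_trans hN hn) fun _ _ => le_rfl
  rw [limsup_eq_iInf_iSup_of_nat]
  change p ≤ μ (⋂ N, ⋃ n ≥ N, s n)
  rw [hanti.measure_iInter
    (fun N => (MeasurableSet.biUnion (to_countable _) fun n _ => hs n).nullMeasurableSet)
    ⟨0, measure_ne_top μ _⟩]
  exact le_iInf fun N => (h N).trans (measure_mono (subset_biUnion_of_mem (le_refl N)))

lemma mul_measure_le_prod_of_le_measure_preimage_prodMk {α β : Type*} [MeasurableSpace α]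
    [MeasurableSpace β] (μ : Measure α) (ν : Measure β) [SFinite ν] {A : Set α}
    {B : Set (α × β)} {p : ℝ≥0∞} (h : ∀ x ∈ A, p ≤ ν (Prod.mk x ⁻¹' B)) :
    p * μ A ≤ μ.prod ν B := by
  set E := toMeasurable (μ.prod ν) B
  have hE : MeasurableSet E := measurableSet_toMeasurable _ _
  have hA : A ⊆ {x | p ≤ ν (Prod.mk x ⁻¹' E)} := fun x hx =>
    (h x hx).trans (measure_mono (preimage_mono (subset_toMeasurable _ _)))
  calc p * μ A ≤ ∫⁻ x in {x | p ≤ ν (Prod.mk x ⁻¹' E)}, p ∂μ := by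
        rw [setLIntegral_const]; gcongr
    _ ≤ ∫⁻ x, ν (Prod.mk x ⁻¹' E) ∂μ :=
        (setLIntegral_mono (measurable_measure_prodMk_left hE) fun _ hx => hx).trans
          (setLIntegral_le_lintegral _ _)
    _ = μ.prod ν B := by rw [← Measure.prod_apply hE, measure_toMeasurable]

lemma measure_le_two_mul_prod_of_le_add {α β : Type*} [MeasurableSpace α] [MeasurableSpace β]
    (μ : Measure α) [SFinite μ] {ν : Measure β} [IsProbabilityMeasure ν] {σ : β → β}
    (hσ : MeasurePreserving σ ν ν) {R : Set (α × β)} {p : ℝ≥0∞}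
    (h : ∀ b, p ≤ μ {x | (x, b) ∈ R} + μ {x | (x, σ b) ∈ R}) : p ≤ 2 * μ.prod ν R := by
  set E := toMeasurable (μ.prod ν) R
  have hE : MeasurableSet E := measurableSet_toMeasurable _ _
  have hsec : Measurable fun b => μ {x | (x, b) ∈ E} := measurable_measure_prodMk_right hE
  have hRE : ∀ b, μ {x | (x, b) ∈ R} ≤ μ {x | (x, b) ∈ E} :=
    fun b => measure_mono fun x hx => subset_toMeasurable _ _ hx
  calc p = ∫⁻ _, p ∂ν := by rw [lintegral_const, measure_univ, mul_one]
    _ ≤ ∫⁻ b, (μ {x | (x, b) ∈ E} + μ {x | (x, σ b) ∈ E}) ∂ν :=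
        lintegral_mono fun b => (h b).trans (add_le_add (hRE b) (hRE (σ b)))
    _ = 2 * ∫⁻ b, μ {x | (x, b) ∈ E} ∂ν := by
        rw [lintegral_add_left hsec, hσ.lintegral_comp hsec, two_mul]
    _ = 2 * μ.prod ν R := by rw [← measure_toMeasurable R, Measure.prod_apply_symm hE]; rfl

end MeasureTheory

namespace ProbabilityTheory

variable {Z : Type*} [MeasurableSpace Z] {D : Measure Z} [IsProbabilityMeasure D] {m : ℕ}
  {g : Z → ℝ}

lemma integral_sampleMean_pi (hm : m ≠ 0) (hg : Integrable g D) :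
    ∫ S, (m : ℝ)⁻¹ * ∑ i, g (S i) ∂(Measure.pi fun _ : Fin m => D) = ∫ z, g z ∂D := by
  rw [integral_const_mul, integral_finsetSum _ fun i _ => integrable_comp_eval hg]
  simp_rw [integral_comp_eval (μ := fun _ : Fin m => D) hg.aestronglyMeasurable]
  simp [hm]

lemma variance_sampleMean_pi_le (hg : Measurable g) (hg01 : ∀ z, g z ∈ Icc (0 : ℝ) 1) :
    Var[fun S => (m : ℝ)⁻¹ * ∑ i, g (S i); Measure.pi fun _ : Fin m => D]
      ≤ (∫ z, g z ∂D) / m := by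
  have hL2 : MemLp g 2 D := memLp_of_bounded (ae_of_all _ hg01) hg.aestronglyMeasurable 2
  have hsum : Var[fun S => ∑ i, g (S i); Measure.pi fun _ : Fin m => D] = m * Var[g; D] := by
    have := variance_sum_pi (μ := fun _ : Fin m => D) (X := fun _ => g) fun _ => hL2
    simpa [Finset.sum_fn] using this
  have hsq : Var[g; D] ≤ ∫ z, g z ∂D :=
    (variance_le_expectation_sq hg.aestronglyMeasurable).trans <|
      integral_mono (hL2.integrable_sq) (hL2.integrable one_le_two) fun z => by
        have := hg01 z; simp only [Pi.pow_apply]; nlinarith [this.1, this.2]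
  rw [variance_const_mul, hsum]
  rcases Nat.eq_zero_or_pos m with rfl | hm
  · simp
  · rw [div_eq_inv_mul, inv_pow, sq, mul_inv, mul_assoc, inv_mul_cancel_left₀ (by positivity)]
    exact mul_le_mul_of_nonneg_left hsq (by positivity)

lemma half_le_measure_integral_le_mul_sampleMean_add (hm : 0 < m) (hg : Measurable g)
    (hg01 : ∀ z, g z ∈ Icc (0 : ℝ) 1) {u s : ℝ} (hu : 0 < u) (hs : (1 + u) / (2 * m * u) ≤ s) :
    2⁻¹ ≤ (Measure.pi fun _ : Fin m => D)
      {S | ∫ z, g z ∂D ≤ (1 + u) * ((m : ℝ)⁻¹ * ∑ i, g (S i) + s)} := by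
  set μ := Measure.pi fun _ : Fin m => D
  set r := ∫ z, g z ∂D
  set Y : (Fin m → Z) → ℝ := fun S => (m : ℝ)⁻¹ * ∑ i, g (S i)
  have hm' : (0 : ℝ) < m := Nat.cast_pos.mpr hm
  have hr0 : 0 ≤ r := integral_nonneg fun z => (hg01 z).1
  have hs0 : 0 < s := lt_of_lt_of_le (by positivity) hs
  have hY : Measurable Y := by fun_prop
  have hYmean : μ[Y] = r :=
    integral_sampleMean_pi hm.ne' ((integrable_const (1 : ℝ)).mono hg.aestronglyMeasurable
      (ae_of_all _ fun z => by simpa [abs_of_nonneg (hg01 z).1] using (hg01 z).2))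
  have hYL2 : MemLp Y 2 μ := by
    refine memLp_of_bounded (a := 0) (b := 1) (ae_of_all _ fun S => ?_) hY.aestronglyMeasurable 2
    have hsum : ∑ i, g (S i) ≤ m := by
      simpa using Finset.sum_le_sum fun i (_ : i ∈ Finset.univ) => (hg01 (S i)).2
    refine ⟨mul_nonneg (by positivity) (Finset.sum_nonneg fun i _ => (hg01 (S i)).1), ?_⟩
    calc Y S ≤ (m : ℝ)⁻¹ * m := mul_le_mul_of_nonneg_left hsum (by positivity)
      _ = 1 := inv_mul_cancel₀ hm'.ne'
  set a := u / (1 + u) * r + s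
  have ha : 0 < a := by positivity
  have hbad : {S | r ≤ (1 + u) * (Y S + s)}ᶜ ⊆ {S | a ≤ |Y S - μ[Y]|} := by
    intro S hS
    simp only [mem_compl_iff, mem_ofPred_eq, not_le] at hS ⊢
    rw [hYmean, abs_sub_comm]
    refine le_trans ?_ (le_abs_self _)
    have hsplit : u / (1 + u) * r = r - r / (1 + u) := by field_simp; ring
    have hYS : Y S < r / (1 + u) - s := by
      rw [lt_sub_iff_add_lt, lt_div_iff₀ (by positivity)]; linarith
    linarith
  have hratio : Var[Y; μ] / a ^ 2 ≤ 1 / 2 := by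
    have hamgm : 4 * (u / (1 + u) * r) * s ≤ a ^ 2 := by nlinarith [sq_nonneg (u / (1 + u) * r - s)]
    have hms : 1 ≤ 2 * m * (u / (1 + u)) * s := by
      rw [div_le_iff₀ (by positivity)] at hs
      rw [show 2 * m * (u / (1 + u)) * s = s * (2 * m * u) / (1 + u) by ring,
        le_div_iff₀ (by positivity)]
      linarith
    rw [div_le_iff₀ (by positivity)]
    calc Var[Y; μ] ≤ r / m := variance_sampleMean_pi_le hg hg01
      _ ≤ r / m * (2 * m * (u / (1 + u)) * s) := le_mul_of_one_le_right (by positivity) hms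
      _ = 1 / 2 * (4 * (u / (1 + u) * r) * s) := by field_simp; ring
      _ ≤ 1 / 2 * a ^ 2 := by gcongr
  have hcompl : μ {S | r ≤ (1 + u) * (Y S + s)}ᶜ ≤ 2⁻¹ :=
    calc _ ≤ μ {S | a ≤ |Y S - μ[Y]|} := measure_mono hbad
      _ ≤ ENNReal.ofReal (Var[Y; μ] / a ^ 2) := meas_ge_le_variance_div_sq hYL2 ha
      _ ≤ ENNReal.ofReal (1 / 2) := ENNReal.ofReal_le_ofReal hratio
      _ = 2⁻¹ := by rw [one_div, ENNReal.ofReal_inv_of_pos two_pos, ENNReal.ofReal_ofNat]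
  rw [prob_compl_eq_one_sub (measurableSet_le measurable_const (by fun_prop))] at hcompl
  rw [← ENNReal.one_sub_inv_two]
  exact tsub_le_iff_left.mpr (tsub_le_iff_right.mp hcompl)

end ProbabilityTheory

def sampleExchange {ι α : Type*} (b : ι → Bool) (q : (ι → α) × (ι → α)) :
    (ι → α) × (ι → α) :=
  (fun i => if b i then q.1 i else q.2 i, fun i => if b i then q.2 i else q.1 i)

lemma sampleExchange_involutive {ι α : Type*} (b : ι → Bool) :
    Function.Involutive (sampleExchange (α := α) b) := fun q => by
  refine Prod.ext (funext fun i => ?_) (funext fun i => ?_) <;>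
    by_cases hb : b i <;> simp [sampleExchange, hb]

lemma measurePreserving_sampleExchange {ι α : Type*} [Fintype ι] [MeasurableSpace α]
    (μ : ι → Measure α) [∀ i, SigmaFinite (μ i)] (b : ι → Bool) :
    MeasurePreserving (sampleExchange b) ((Measure.pi μ).prod (Measure.pi μ))
      ((Measure.pi μ).prod (Measure.pi μ)) := by
  set φ := MeasurableEquiv.arrowProdEquivProdArrow α α ι
  have hφ := measurePreserving_arrowProdEquivProdArrow α α ι μ μ
  have hswap : MeasurePreserving (fun p : ι → α × α => fun i => if b i then p i else (p i).swap)
      (Measure.pi fun i => (μ i).prod (μ i)) (Measure.pi fun i => (μ i).prod (μ i)) :=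
    measurePreserving_pi _ _ (f := fun i (x : α × α) => if b i then x else x.swap) fun i => by
      by_cases hb : b i
      · simp only [hb, if_true]; exact MeasurePreserving.id _
      · simpa [hb] using Measure.measurePreserving_swap
  have heq : sampleExchange b = φ ∘ (fun p : ι → α × α => fun i =>
      if b i then p i else (p i).swap) ∘ φ.symm := by
    funext q
    refine Prod.ext (funext fun i => ?_) (funext fun i => ?_) <;>
      by_cases hb : b i <;> simp [sampleExchange, φ, hb, MeasurableEquiv.arrowProdEquivProdArrow,
        Equiv.arrowProdEquivProdArrow]
  rw [heq]
  exact hφ.comp (hswap.comp (hφ.symm _))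

lemma measurePreserving_not_radMeasure {ι : Type*} [Fintype ι] :
    MeasurePreserving (fun b : ι → Bool => fun i => !b i) (Measure.pi fun _ => radMeasure)
      (Measure.pi fun _ => radMeasure) := by
  refine measurePreserving_pi _ _ fun _ => ⟨measurable_of_countable _, ?_⟩
  rw [radMeasure, PMF.toMeasure_map _ (f := not) (measurable_of_countable _)]
  congr 1
  ext b
  cases b <;> simp [PMF.map_apply, PMF.uniformOfFintype_apply]

lemma empRisk_mem_Icc {Z F : Type*} {ℓ : F → Z → ℝ} {m : ℕ}
    (hℓ : ∀ f z, ℓ f z ∈ Icc (0 : ℝ) 1) (S : Fin m → Z) (f : F) :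
    empRisk ℓ S f ∈ Icc (0 : ℝ) 1 := by
  refine ⟨mul_nonneg (by positivity) (Finset.sum_nonneg fun i _ => (hℓ f (S i)).1), ?_⟩
  calc empRisk ℓ S f ≤ (m : ℝ)⁻¹ * m :=
        mul_le_mul_of_nonneg_left
          (by simpa using Finset.sum_le_sum fun i (_ : i ∈ Finset.univ) => (hℓ f (S i)).2)
          (by positivity)
    _ ≤ 1 := by
        rcases Nat.eq_zero_or_pos m with rfl | hm
        · simp
        · rw [inv_mul_cancel₀ (by positivity)]

section Symmetrization

variable {Z F : Type*} [MeasurableSpace Z] (D : Measure Z) [IsProbabilityMeasure D]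
  {ℓ : F → Z → ℝ} {m : ℕ}

lemma half_le_measure_ghost_sample (hℓ : ∀ f z, ℓ f z ∈ Icc (0 : ℝ) 1)
    (hℓZ : ∀ f, Measurable (ℓ f)) (hm : 0 < m) {c c₂ c' t t' : ℝ} (hc₂ : 0 < c₂)
    (hc' : 0 ≤ c') (hcc : (1 + c₂) * (1 + c') = 1 + c) (htt : t = 2 * (1 + c₂) * t')
    (ht' : (1 + c₂) / (2 * m * c₂) ≤ t') {S : Fin m → Z}
    (hS : t ≤ ⨆ f : F, (risk D ℓ f - (1 + c) * empRisk ℓ S f)) :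
    2⁻¹ ≤ (Measure.pi fun _ : Fin m => D)
      {S' | t' ≤ ⨆ f : F, (empRisk ℓ S' f - (1 + c') * empRisk ℓ S f)} := by
  have ht'0 : 0 < t' := lt_of_lt_of_le (by positivity) ht'
  have : Nonempty F := by
    by_contra hF
    rw [not_nonempty_iff] at hF
    rw [Real.iSup_of_isEmpty] at hS
    nlinarith
  have hf : ∀ n : ℕ, ∃ f : F,
      t - (1 + c₂) / (n + 1) < risk D ℓ f - (1 + c) * empRisk ℓ S f := fun n =>
    exists_lt_of_lt_ciSup (lt_of_lt_of_le (sub_lt_self _ (by positivity)) hS)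
  choose f hf using hf
  set C : ℕ → Set (Fin m → Z) :=
    fun n => {S' | risk D ℓ (f n) ≤ (1 + c₂) * (empRisk ℓ S' (f n) + t')}
  have hC : ∀ n, MeasurableSet (C n) := fun n =>
    measurableSet_le measurable_const (by unfold empRisk; fun_prop)
  have hbdd : ∀ S' : Fin m → Z,
      BddAbove (Set.range fun f => empRisk ℓ S' f - (1 + c') * empRisk ℓ S f) := by
    refine fun S' => ⟨1, ?_⟩
    rintro _ ⟨g, rfl⟩
    have h' := empRisk_mem_Icc hℓ S' g
    have h := empRisk_mem_Icc hℓ S g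
    dsimp only
    nlinarith [h.1, h'.2]
  refine (le_measure_limsup_atTop hC fun n =>
    half_le_measure_integral_le_mul_sampleMean_add hm (hℓZ (f n)) (hℓ (f n)) hc₂ ht')
    |>.trans (measure_mono fun S' hS' => ?_)
  rw [mem_limsup_iff_frequently_mem] at hS'
  refine le_of_tendsto_of_frequently (f := fun n : ℕ => t' - 1 / ((n : ℝ) + 1))
    (by simpa using tendsto_one_div_add_atTop_nhds_zero_nat.const_sub t') (hS'.mono fun n hn => ?_)
  refine le_trans ?_ (le_ciSup (hbdd S') (f n))
  have hfn := hf n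
  have hn : risk D ℓ (f n) ≤ (1 + c₂) * (empRisk ℓ S' (f n) + t') := hn
  rw [← hcc, htt] at hfn
  refine le_of_mul_le_mul_left ?_ (by positivity : 0 < 1 + c₂)
  have : (1 + c₂) * (1 / ((n : ℝ) + 1)) = (1 + c₂) / (n + 1) := mul_one_div _ _
  linarith

end Symmetrization

noncomputable def shiftedRademacherSum {Z F : Type*} (ℓ : F → Z → ℝ) (c' : ℝ) {m : ℕ}
    (S : Fin m → Z) (ε : Fin m → Bool) (f : F) : ℝ :=
  ((1 + c' / 2) / m) * ∑ i, (rad (ε i) - (c' / 2) / (1 + c' / 2)) * ℓ f (S i)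

section Rademacher

variable {Z F : Type*} {ℓ : F → Z → ℝ} {m : ℕ} {c' : ℝ}

lemma empRisk_sampleExchange_sub (hc' : 1 + c' / 2 ≠ 0) (b : Fin m → Bool)
    (q : (Fin m → Z) × (Fin m → Z)) (f : F) :
    empRisk ℓ (sampleExchange b q).2 f - (1 + c') * empRisk ℓ (sampleExchange b q).1 f
      = shiftedRademacherSum ℓ c' q.2 b f + shiftedRademacherSum ℓ c' q.1 (fun i => !b i) f := by
  have hκ : (1 + c' / 2) * ((c' / 2) / (1 + c' / 2)) = c' / 2 := mul_div_cancel₀ _ hc'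
  have hterm : ∀ i, ℓ f ((sampleExchange b q).2 i) - (1 + c') * ℓ f ((sampleExchange b q).1 i)
      = (1 + c' / 2) * ((rad (b i) - (c' / 2) / (1 + c' / 2)) * ℓ f (q.2 i)
        + (rad (!b i) - (c' / 2) / (1 + c' / 2)) * ℓ f (q.1 i)) := fun i => by
    by_cases hb : b i <;> simp only [sampleExchange, rad, hb, if_true, if_false,
      Bool.not_true, Bool.not_false, Bool.false_eq_true] <;>
      linear_combination (ℓ f (q.1 i) + ℓ f (q.2 i)) * hκ
  simp only [empRisk, shiftedRademacherSum]
  calc _ = (m : ℝ)⁻¹ * ∑ i, (ℓ f ((sampleExchange b q).2 i)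
        - (1 + c') * ℓ f ((sampleExchange b q).1 i)) := by
        rw [Finset.sum_sub_distrib, ← Finset.mul_sum]; ring
    _ = _ := by simp_rw [hterm]; rw [← Finset.mul_sum, Finset.sum_add_distrib]; ring

lemma shiftedRademacherSum_le (hℓ : ∀ f z, ℓ f z ∈ Icc (0 : ℝ) 1) (hc' : 0 ≤ c')
    (S : Fin m → Z) (ε : Fin m → Bool) (f : F) : shiftedRademacherSum ℓ c' S ε f ≤ 1 + c' / 2 := by
  have hκ : 0 ≤ (c' / 2) / (1 + c' / 2) := by positivity
  have hsum : ∑ i, (rad (ε i) - (c' / 2) / (1 + c' / 2)) * ℓ f (S i) ≤ m := by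
    refine (Finset.sum_le_sum fun i _ => ?_).trans_eq (by simp : ∑ _i : Fin m, (1 : ℝ) = m)
    have hrad : rad (ε i) ≤ 1 := by unfold rad; split <;> norm_num
    nlinarith [(hℓ f (S i)).1, (hℓ f (S i)).2]
  calc shiftedRademacherSum ℓ c' S ε f ≤ ((1 + c' / 2) / m) * m :=
        mul_le_mul_of_nonneg_left hsum (by positivity)
    _ ≤ 1 + c' / 2 := by
        rcases Nat.eq_zero_or_pos m with rfl | hm
        · simp; positivity
        · rw [div_mul_cancel₀ _ (by positivity)]

variable [MeasurableSpace Z] (D : Measure Z) [IsProbabilityMeasure D]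

lemma prod_le_two_mul_prod_shiftedRademacherSum (hℓ : ∀ f z, ℓ f z ∈ Icc (0 : ℝ) 1)
    (hc' : 0 ≤ c') (t' : ℝ) :
    ((Measure.pi fun _ : Fin m => D).prod (Measure.pi fun _ : Fin m => D))
        {q | t' ≤ ⨆ f : F, (empRisk ℓ q.2 f - (1 + c') * empRisk ℓ q.1 f)}
      ≤ 2 * ((Measure.pi fun _ : Fin m => D).prod (Measure.pi fun _ : Fin m => radMeasure))
        {p | t' / 2 ≤ ⨆ f : F, shiftedRademacherSum ℓ c' p.1 p.2 f} := by
  set μ := Measure.pi fun _ : Fin m => D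
  set B := {q : (Fin m → Z) × (Fin m → Z) |
    t' ≤ ⨆ f : F, (empRisk ℓ q.2 f - (1 + c') * empRisk ℓ q.1 f)}
  set R := {p : (Fin m → Z) × (Fin m → Bool) |
    t' / 2 ≤ ⨆ f : F, shiftedRademacherSum ℓ c' p.1 p.2 f}
  refine measure_le_two_mul_prod_of_le_add μ measurePreserving_not_radMeasure fun b => ?_
  have hB : sampleExchange b ⁻¹' B ⊆
      Prod.snd ⁻¹' {S | (S, b) ∈ R} ∪ Prod.fst ⁻¹' {S | (S, fun i => !b i) ∈ R} := by
    intro q hq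
    by_contra hq'
    simp only [mem_union, mem_preimage, mem_ofPred_eq, not_or, not_le, B, R] at hq hq'
    rcases isEmpty_or_nonempty F with hF | hF
    · simp only [Real.iSup_of_isEmpty] at hq hq'
      linarith
    have hbdd : ∀ (S : Fin m → Z) (ε : Fin m → Bool),
        BddAbove (range fun f : F => shiftedRademacherSum ℓ c' S ε f) :=
      fun S ε => ⟨1 + c' / 2, by rintro _ ⟨f, rfl⟩; exact shiftedRademacherSum_le hℓ hc' S ε f⟩
    refine hq.not_gt (lt_of_le_of_lt (ciSup_le fun f => ?_) (add_lt_add hq'.1 hq'.2 |>.trans_eq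
      (add_halves t')))
    rw [empRisk_sampleExchange_sub (by positivity)]
    exact add_le_add (le_ciSup (hbdd _ _) f) (le_ciSup (hbdd _ _) f)
  have hexch := measurePreserving_sampleExchange (fun _ : Fin m => D) b
  calc μ.prod μ B = μ.prod μ (sampleExchange b ⁻¹' (sampleExchange b ⁻¹' B)) := by
        rw [(sampleExchange_involutive b).preimage B]
    _ ≤ μ.prod μ (sampleExchange b ⁻¹' B) := hexch.measure_preimage_le _
    _ ≤ μ.prod μ (Prod.snd ⁻¹' {S | (S, b) ∈ R})
          + μ.prod μ (Prod.fst ⁻¹' {S | (S, fun i => !b i) ∈ R}) :=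
        (measure_mono hB).trans (measure_union_le _ _)
    _ ≤ μ {S | (S, b) ∈ R} + μ {S | (S, fun i => !b i) ∈ R} :=
        add_le_add (measurePreserving_snd.measure_preimage_le _)
          (measurePreserving_fst.measure_preimage_le _)

end Rademacher

/-- Shifted symmetrization in deviation. -/
theorem stmt8 {Z F : Type*} [MeasurableSpace Z]
    (D : Measure Z) [IsProbabilityMeasure D]
    (ℓ : F → Z → ℝ)
    (hℓ : ∀ f z, ℓ f z ∈ Set.Icc (0 : ℝ) 1)
    (hℓZ : ∀ f, Measurable (ℓ f))
    (m : ℕ) (hm : 0 < m)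
    (c c₂ : ℝ) (hc₂ : 0 < c₂) (hc : c₂ < c)
    (c' t t' : ℝ)
    (hc' : c' = (c - c₂) / (1 + c₂))
    (ht' : t' = t / (2 * (1 + c₂)))
    (ht : (1 + c₂) ^ 2 / (m * c₂) ≤ t) :
    4⁻¹ * (Measure.pi fun _ : Fin m => D)
        {S | t ≤ ⨆ f : F, (risk D ℓ f - (1 + c) * empRisk ℓ S f)} ≤
      ((Measure.pi fun _ : Fin m => D).prod (Measure.pi fun _ : Fin m => radMeasure))
        {p | t' / 2 ≤ ⨆ f : F,
          ((1 + c' / 2) / m) *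
            ∑ i, (rad (p.2 i) - (c' / 2) / (1 + c' / 2)) * ℓ f (p.1 i)} := by
  have h1c₂ : 0 < 1 + c₂ := by linarith
  have hc'0 : 0 ≤ c' := hc' ▸ div_nonneg (by linarith) h1c₂.le
  have hcc : (1 + c₂) * (1 + c') = 1 + c := by rw [hc']; field_simp; ring
  have htt : t = 2 * (1 + c₂) * t' := by rw [ht']; field_simp
  have ht'm : (1 + c₂) / (2 * m * c₂) ≤ t' :=
    calc (1 + c₂) / (2 * m * c₂) = (1 + c₂) ^ 2 / (m * c₂) / (2 * (1 + c₂)) := by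
          field_simp
      _ ≤ t' := ht' ▸ by gcongr
  set μ := Measure.pi fun _ : Fin m => D
  set ν := Measure.pi fun _ : Fin m => radMeasure
  have hghost := mul_measure_le_prod_of_le_measure_preimage_prodMk μ μ
    (A := {S | t ≤ ⨆ f : F, (risk D ℓ f - (1 + c) * empRisk ℓ S f)})
    (B := {q | t' ≤ ⨆ f : F, (empRisk ℓ q.2 f - (1 + c') * empRisk ℓ q.1 f)}) fun S hS =>
      half_le_measure_ghost_sample D hℓ hℓZ hm hc₂ hc'0 hcc htt ht'm hS
  have hsymm := prod_le_two_mul_prod_shiftedRademacherSum (F := F) (m := m) D hℓ hc'0 t'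
  calc 4⁻¹ * μ {S | t ≤ ⨆ f : F, (risk D ℓ f - (1 + c) * empRisk ℓ S f)}
      = 2⁻¹ * (2⁻¹ * μ {S | t ≤ ⨆ f : F, (risk D ℓ f - (1 + c) * empRisk ℓ S f)}) := by
        rw [← mul_assoc, ← ENNReal.mul_inv (by simp) (by simp)]; norm_num
    _ ≤ 2⁻¹ * (2 * μ.prod ν {p | t' / 2 ≤ ⨆ f : F, shiftedRademacherSum ℓ c' p.1 p.2 f}) :=
        mul_le_mul_right (hghost.trans hsymm) _
    _ = _ := ENNReal.inv_mul_cancel_left (by simp) (by simp)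
end

section
/- (Shifted-flatness inequality.) Let f : Z → [0,1] be measurable, let h ∈ (0,1] and c₂ > 0 be constants, and let t be a real number with t ≥ (1+c₂)(1+c₂h²) / (m·c₂·h²). Then P_S( L_D(f) − (1+c₂)·L̂_S(f) + c₂(1−h²)·L̂_S(f²) ≥ t/2 ) ≤ 1/2, where the probability is over the i.i.d. sample S = (z_1,…,z_m) ∼ D^m and f² denotes the pointwise square of f. -/
/-!
Put `g = (1 + c₂) f - c₂ (1 - h²) f²`. The event says that the sample sum of `g` falls below its
mean `m E[g]` by `m (t / 2 + d)`, where `d = E[g] - E[f]`. Pointwise `(1 + c₂ h²) f ≤ g ≤ 1 + c₂`,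
so `d ≥ c₂ h² E[f]` and, by the Bhatia–Davis inequality,
`Var[g] ≤ (1 + c₂) E[g] ≤ (1 + c₂) (1 + c₂ h²) d / (c₂ h²) ≤ m t d`.
Chebyshev's inequality bounds the probability by `t d / (t / 2 + d)²`, which is at most `1 / 2`
by AM-GM.
-/

open MeasureTheory Real

/-- Empirical risk of a `[0,1]`-valued function `f` on a sample `S` of size `m`. -/
noncomputable def empRisk' {Z : Type*} {m : ℕ} (S : Fin m → Z) (f : Z → ℝ) : ℝ :=
  (m : ℝ)⁻¹ * ∑ i, f (S i)

/-- Risk (expected value) of `f` under the data distribution `D`. -/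
noncomputable def risk' {Z : Type*} [MeasurableSpace Z] (D : Measure Z) (f : Z → ℝ) : ℝ :=
  ∫ z, f z ∂D

open ProbabilityTheory

theorem measure_sum_le_sub_le {ι Z : Type*} [Fintype ι] [MeasurableSpace Z]
    (D : Measure Z) [IsProbabilityMeasure D] {g : Z → ℝ} (hg : MemLp g 2 D) {c : ℝ}
    (hc : 0 < c) :
    (Measure.pi fun _ : ι => D) {S | ∑ i, g (S i) ≤ (Fintype.card ι : ℝ) * D[g] - c}
      ≤ ENNReal.ofReal ((Fintype.card ι : ℝ) * Var[g; D] / c ^ 2) := by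
  set Y : (ι → Z) → ℝ := ∑ i, fun S ↦ g (S i) with hY
  have hY_apply (S : ι → Z) : Y S = ∑ i, g (S i) := by simp [hY, Finset.sum_apply]
  have hg_eval (i : ι) : MemLp (fun S : ι → Z ↦ g (S i)) 2 (Measure.pi fun _ : ι => D) :=
    hg.comp_measurePreserving (measurePreserving_eval _ i)
  have hY_mean : (Measure.pi fun _ : ι => D)[Y] = (Fintype.card ι : ℝ) * D[g] := by
    simp_rw [hY_apply]
    rw [integral_finsetSum _ fun i _ ↦ (hg_eval i).integrable one_le_two]
    simp [integral_comp_eval (μ := fun _ : ι => D) hg.aestronglyMeasurable]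
  have hY_var : Var[Y; Measure.pi fun _ : ι => D] = (Fintype.card ι : ℝ) * Var[g; D] := by
    simp [hY, variance_sum_pi fun _ ↦ hg]
  have hY_memLp : MemLp Y 2 (Measure.pi fun _ : ι => D) :=
    memLp_finsetSum' _ fun i _ ↦ hg_eval i
  calc _ ≤ (Measure.pi fun _ : ι => D) {S | c ≤ |Y S - (Measure.pi fun _ : ι => D)[Y]|} := by
        refine measure_mono fun S hS ↦ ?_
        rw [Set.mem_ofPred_eq] at hS
        rw [Set.mem_ofPred_eq, hY_mean, hY_apply, abs_sub_comm, le_abs]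
        exact Or.inl (by linarith)
    _ ≤ _ := by rw [← hY_var]; exact meas_ge_le_variance_div_sq hY_memLp hc

theorem mul_div_sq_le_half {m a b μ E V t : ℝ} (hm : 0 < m) (ha : 0 < a) (hb : 0 ≤ b)
    (hμ : 0 ≤ μ) (hE : (1 + a) * μ ≤ E) (hV : V ≤ b * E) (ht : b * (1 + a) / (m * a) ≤ t) :
    m * V / (m * (t / 2 + (E - μ))) ^ 2 ≤ 1 / 2 := by
  have hd : a * μ ≤ E - μ := by linarith
  have hmt : b * (1 + a) ≤ m * t * a := by
    rw [div_le_iff₀ (by positivity)] at ht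
    linarith
  have hbE : b * E ≤ m * t * (E - μ) := by
    refine le_of_mul_le_mul_left ?_ ha
    calc a * (b * E) = b * (a * μ + a * (E - μ)) := by ring
      _ ≤ b * ((E - μ) + a * (E - μ)) := by gcongr
      _ = b * (1 + a) * (E - μ) := by ring
      _ ≤ m * t * a * (E - μ) := by gcongr; nlinarith
      _ = a * (m * t * (E - μ)) := by ring
  refine div_le_of_le_mul₀ (sq_nonneg _) (by norm_num) ?_
  -- AM-GM: `2 t d ≤ (t / 2 + d) ^ 2` with `d = E - μ`
  calc m * V ≤ m * (m * t * (E - μ)) := by gcongr; linarith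
    _ ≤ 1 / 2 * (m * (t / 2 + (E - μ))) ^ 2 := by
        nlinarith [mul_nonneg (sq_nonneg m) (sq_nonneg (t / 2 - (E - μ)))]

theorem measure_shifted_deviation_le_half {Z : Type*} [MeasurableSpace Z]
    (D : Measure Z) [IsProbabilityMeasure D] {f g : Z → ℝ} (hfi : Integrable f D)
    (hf₀ : ∀ z, 0 ≤ f z) (hgm : Measurable g) {a b : ℝ} (hg : ∀ z, g z ∈ Set.Icc 0 b)
    (hfg : ∀ z, (1 + a) * f z ≤ g z) (ha : 0 < a) (hb : 0 < b) {m : ℕ} (hm : 0 < m) {t : ℝ}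
    (ht : b * (1 + a) / (m * a) ≤ t) :
    (Measure.pi fun _ : Fin m => D) {S | t / 2 ≤ risk' D f - empRisk' S g} ≤ 1 / 2 := by
  have hm₀ : (0 : ℝ) < m := by exact_mod_cast hm
  have hg_memLp : MemLp g 2 D := MemLp.of_bound hgm.aestronglyMeasurable b
    (ae_of_all _ fun z ↦ abs_le.mpr ⟨by linarith [(hg z).1], (hg z).2⟩)
  have hf_mean : 0 ≤ D[f] := integral_nonneg hf₀
  have hfg_mean : (1 + a) * D[f] ≤ D[g] := by
    rw [← integral_const_mul]
    exact integral_mono (hfi.const_mul _) (hg_memLp.integrable one_le_two) hfg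
  have hg_var : Var[g; D] ≤ b * D[g] := by
    refine (variance_le_sub_mul_sub (ae_of_all _ hg) hgm.aemeasurable).trans ?_
    nlinarith [sq_nonneg D[g]]
  have ht₀ : 0 < t := lt_of_lt_of_le (by positivity) ht
  calc _ ≤ (Measure.pi fun _ : Fin m => D)
        {S | ∑ i, g (S i) ≤ m * D[g] - m * (t / 2 + (D[g] - D[f]))} := by
        refine measure_mono fun S hS ↦ ?_
        rw [Set.mem_ofPred_eq, risk', empRisk'] at hS
        rw [Set.mem_ofPred_eq, ← mul_inv_cancel_left₀ hm₀.ne' (∑ i, g (S i))]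
        have := mul_le_mul_of_nonneg_left (le_sub_comm.mp hS) hm₀.le
        linarith
    _ ≤ ENNReal.ofReal (m * Var[g; D] / (m * (t / 2 + (D[g] - D[f]))) ^ 2) := by
        have hgap : 0 < m * (t / 2 + (D[g] - D[f])) :=
          mul_pos hm₀ (by nlinarith [mul_nonneg ha.le hf_mean])
        simpa only [Fintype.card_fin] using measure_sum_le_sub_le (ι := Fin m) D hg_memLp hgap
    _ ≤ ENNReal.ofReal (1 / 2) :=
        ENNReal.ofReal_le_ofReal (mul_div_sq_le_half hm₀ ha hb.le hf_mean hfg_mean hg_var ht)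
    _ = 1 / 2 := by rw [ENNReal.ofReal_div_of_pos two_pos]; simp

def shiftedLoss (c h y : ℝ) : ℝ := (1 + c) * y - c * (1 - h ^ 2) * y ^ 2

theorem mul_le_shiftedLoss {c h y : ℝ} (hc : 0 ≤ c) (hh : h ^ 2 ≤ 1) (hy : y ∈ Set.Icc 0 1) :
    (1 + c * h ^ 2) * y ≤ shiftedLoss c h y := by
  have : y ^ 2 ≤ y := by nlinarith [hy.1, hy.2]
  have : 0 ≤ c * (1 - h ^ 2) := mul_nonneg hc (by linarith)
  unfold shiftedLoss
  nlinarith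

theorem shiftedLoss_mem_Icc {c h y : ℝ} (hc : 0 ≤ c) (hh : h ^ 2 ≤ 1) (hy : y ∈ Set.Icc 0 1) :
    shiftedLoss c h y ∈ Set.Icc 0 (1 + c) := by
  refine ⟨(mul_nonneg (by positivity) hy.1).trans (mul_le_shiftedLoss hc hh hy), ?_⟩
  have : 0 ≤ c * (1 - h ^ 2) * y ^ 2 := mul_nonneg (mul_nonneg hc (by linarith)) (sq_nonneg y)
  unfold shiftedLoss
  nlinarith [hy.2]

/-- The shifted-flatness inequality. -/
theorem stmt9 {Z : Type*} [MeasurableSpace Z]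
    (D : Measure Z) [IsProbabilityMeasure D]
    (f : Z → ℝ) (hf : ∀ z, f z ∈ Set.Icc (0 : ℝ) 1) (hfm : Measurable f)
    (m : ℕ) (hm : 0 < m)
    (h c₂ : ℝ) (hh : h ∈ Set.Ioc (0 : ℝ) 1) (hc₂ : 0 < c₂)
    (t : ℝ) (ht : (1 + c₂) * (1 + c₂ * h ^ 2) / (m * c₂ * h ^ 2) ≤ t) :
    (Measure.pi fun _ : Fin m => D)
        {S | t / 2 ≤
          risk' D f - (1 + c₂) * empRisk' S f + c₂ * (1 - h ^ 2) * empRisk' S (fun z => f z ^ 2)}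
      ≤ 1 / 2 := by
  have hh₂ : h ^ 2 ≤ 1 := pow_le_one₀ hh.1.le hh.2
  have hrisk (S : Fin m → Z) : risk' D f - (1 + c₂) * empRisk' S f
      + c₂ * (1 - h ^ 2) * empRisk' S (fun z => f z ^ 2)
      = risk' D f - empRisk' S (fun z ↦ shiftedLoss c₂ h (f z)) := by
    simp only [empRisk', shiftedLoss, Finset.sum_sub_distrib, ← Finset.mul_sum]
    ring
  simp_rw [hrisk]
  refine measure_shifted_deviation_le_half D
    (Integrable.of_mem_Icc 0 1 hfm.aemeasurable (ae_of_all _ hf)) (fun z ↦ (hf z).1)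
    (by unfold shiftedLoss; fun_prop) (fun z ↦ shiftedLoss_mem_Icc hc₂.le hh₂ (hf z))
    (fun z ↦ mul_le_shiftedLoss hc₂.le hh₂ (hf z)) (mul_pos hc₂ (pow_pos hh.1 2)) (by positivity)
    hm ?_
  rwa [← mul_assoc]
end
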